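/- For every unit vector |ψ⟩ in ℂ^d with d ≥ 2, there exists a real orthogonal matrix K and an angle θ ∈ [0, π/2] such that K|ψ⟩ = (1/√2)(1, e^{iθ}, 0, ..., 0)^T up to a global phase. -/

import Mathlib

/-!
Write a complex vector as `z = a + i b` with `a, b` real. A real orthogonal matrix acts on `a` and
`b` separately, so it maps `z` to `w` as soon as the pairs of real and imaginary parts have the same
Gram matrix, and that Gram matrix is encoded by `∑ |zᵢ|²` together with the bilinear square
`∑ zᵢ²`. For a unit vector `ψ` with `∑ ψᵢ² = r e^{iα}` we have `r ≤ 1`, and the vector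
`e^{iγ} (1, e^{iθ}, 0, …, 0) / √2` with `θ = arccos r`, `γ = (α - θ) / 2` has the same norm and the
same bilinear square `e^{2iγ} cos θ e^{iθ}`.
-/

open Complex Matrix
open scoped InnerProductSpace

section Gram

variable {𝕜 V ι : Type*} [RCLike 𝕜] [NormedAddCommGroup V] [InnerProductSpace 𝕜 V]
  [Fintype ι]

theorem exists_linearIsometry_apply_eq_of_inner_eq [FiniteDimensional 𝕜 V] {a u : ι → V}
    (h : ∀ i j, ⟪a i, a j⟫_𝕜 = ⟪u i, u j⟫_𝕜) :
    ∃ T : V →ₗᵢ[𝕜] V, ∀ i, T (a i) = u i := by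
  classical
  -- `c ↦ ∑ cᵢ uᵢ` factors through `c ↦ ∑ cᵢ aᵢ` as an isometry on its range, extended to `V`.
  set M := Fintype.linearCombination 𝕜 a
  set L := Fintype.linearCombination 𝕜 u
  have norm_eq : ∀ c, ‖L c‖ = ‖M c‖ := fun c => by
    rw [@norm_eq_sqrt_re_inner 𝕜, @norm_eq_sqrt_re_inner 𝕜]
    simp only [L, M, Fintype.linearCombination_apply, sum_inner, inner_sum, inner_smul_left,
      inner_smul_right, h]
  have ker_le : LinearMap.ker M ≤ LinearMap.ker L := fun c hc => by
    rw [LinearMap.mem_ker, ← norm_eq_zero, norm_eq, norm_eq_zero, ← LinearMap.mem_ker]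
    exact hc
  let T₀ : LinearMap.range M →ₗ[𝕜] V :=
    (LinearMap.ker M).liftQ L ker_le ∘ₗ M.quotKerEquivRange.symm.toLinearMap
  have T₀_apply : ∀ c, T₀ ⟨M c, LinearMap.mem_range_self M c⟩ = L c := fun c => by
    simp [T₀, LinearMap.quotKerEquivRange_symm_apply_image]
  let T : LinearMap.range M →ₗᵢ[𝕜] V :=
    ⟨T₀, by rintro ⟨_, c, rfl⟩; rw [T₀_apply, norm_eq]; rfl⟩
  refine ⟨T.extend, fun i => ?_⟩
  calc T.extend (a i) = T.extend (M (Pi.single i 1)) := by simp [M]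
    _ = L (Pi.single i 1) := (T.extend_apply ⟨_, LinearMap.mem_range_self M _⟩).trans (T₀_apply _)
    _ = u i := by simp [L]

end Gram

theorem LinearIsometry.exists_orthogonal_mulVec_eq {n : Type*} [Fintype n] [DecidableEq n]
    (T : EuclideanSpace ℝ n →ₗᵢ[ℝ] EuclideanSpace ℝ n) :
    ∃ K : Matrix n n ℝ, Kᵀ * K = 1 ∧ ∀ x, K *ᵥ x = T (WithLp.toLp 2 x) := by
  let b := (EuclideanSpace.basisFun n ℝ).toBasis
  let f := T.toLinearIsometryEquiv rfl
  refine ⟨LinearMap.toMatrix b b f, ?_, fun x => ?_⟩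
  · exact (mem_orthogonalGroup_iff' n ℝ).1 <|
      f.toMatrix_mem_unitaryGroup (EuclideanSpace.basisFun n ℝ) (EuclideanSpace.basisFun n ℝ)
  · have : toEuclideanLin (LinearMap.toMatrix b b f) = f := by
      rw [toEuclideanLin_eq_toLin_orthonormal, Matrix.toLin_toMatrix]
    exact congrArg WithLp.ofLp (LinearMap.congr_fun this (WithLp.toLp 2 x))

section ComplexParts

variable {n : Type*} [Fintype n]

theorem sum_re_sq (z : n → ℂ) :
    ∑ i, (z i).re ^ 2 = (∑ i, ‖z i‖ ^ 2 + (∑ i, z i ^ 2).re) / 2 := by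
  simp only [re_sum, ← Finset.sum_add_distrib, Finset.sum_div]
  refine Finset.sum_congr rfl fun i _ => ?_
  rw [Complex.sq_norm, normSq_apply, sq (z i), mul_re]; ring

theorem sum_im_sq (z : n → ℂ) :
    ∑ i, (z i).im ^ 2 = (∑ i, ‖z i‖ ^ 2 - (∑ i, z i ^ 2).re) / 2 := by
  simp only [re_sum, ← Finset.sum_sub_distrib, Finset.sum_div]
  refine Finset.sum_congr rfl fun i _ => ?_
  rw [Complex.sq_norm, normSq_apply, sq (z i), mul_re]; ring

theorem sum_re_mul_im (z : n → ℂ) :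
    ∑ i, (z i).re * (z i).im = (∑ i, z i ^ 2).im / 2 := by
  simp only [im_sum, Finset.sum_div]
  refine Finset.sum_congr rfl fun i _ => ?_
  rw [sq, mul_im]; ring

theorem re_map_ofReal_mulVec {m : Type*} (K : Matrix m n ℝ) (z : n → ℂ) (i : m) :
    ((K.map ofReal *ᵥ z) i).re = (K *ᵥ fun j => (z j).re) i := by
  simp [mulVec, dotProduct, re_sum]

theorem im_map_ofReal_mulVec {m : Type*} (K : Matrix m n ℝ) (z : n → ℂ) (i : m) :
    ((K.map ofReal *ᵥ z) i).im = (K *ᵥ fun j => (z j).im) i := by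
  simp [mulVec, dotProduct, im_sum]

theorem exists_orthogonal_map_ofReal_mulVec_eq [DecidableEq n] {z w : n → ℂ}
    (hnorm : ∑ i, ‖z i‖ ^ 2 = ∑ i, ‖w i‖ ^ 2) (hsq : ∑ i, z i ^ 2 = ∑ i, w i ^ 2) :
    ∃ K : Matrix n n ℝ, Kᵀ * K = 1 ∧ K.map ofReal *ᵥ z = w := by
  let parts (v : n → ℂ) : Fin 2 → EuclideanSpace ℝ n :=
    ![WithLp.toLp 2 fun i => (v i).re, WithLp.toLp 2 fun i => (v i).im]
  have hre : ∑ i, (z i).re * (z i).re = ∑ i, (w i).re * (w i).re := by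
    simp only [← sq, sum_re_sq, hnorm, hsq]
  have him : ∑ i, (z i).im * (z i).im = ∑ i, (w i).im * (w i).im := by
    simp only [← sq, sum_im_sq, hnorm, hsq]
  have hreim : ∑ i, (z i).re * (z i).im = ∑ i, (w i).re * (w i).im := by
    simp only [sum_re_mul_im, hsq]
  have gram : ∀ i j, ⟪parts z i, parts z j⟫_ℝ = ⟪parts w i, parts w j⟫_ℝ := by
    intro i j
    fin_cases i <;> fin_cases j <;>
      simp only [parts, Fin.zero_eta, Fin.mk_one, cons_val_zero, cons_val_one,
        EuclideanSpace.inner_toLp_toLp, dotProduct, star_trivial]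
    exacts [hre, by simpa only [mul_comm] using hreim, hreim, him]
  obtain ⟨T, hT⟩ := exists_linearIsometry_apply_eq_of_inner_eq gram
  obtain ⟨K, hK, hKT⟩ := T.exists_orthogonal_mulVec_eq
  refine ⟨K, hK, funext fun i => Complex.ext ?_ ?_⟩
  · rw [re_map_ofReal_mulVec, hKT]; exact congrFun (congrArg WithLp.ofLp (hT 0)) i
  · rw [im_map_ofReal_mulVec, hKT]; exact congrFun (congrArg WithLp.ofLp (hT 1)) i

end ComplexParts

theorem exists_cos_mul_exp_phase_of_norm_le_one {S : ℂ} (hS : ‖S‖ ≤ 1) :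
    ∃ θ ∈ Set.Icc 0 (Real.pi / 2), ∃ γ : ℝ,
      S = exp (I * γ) ^ 2 * (Real.cos θ * exp (I * θ)) := by
  refine ⟨Real.arccos ‖S‖, ⟨Real.arccos_nonneg _, Real.arccos_le_pi_div_two.2 (norm_nonneg S)⟩,
    (arg S - Real.arccos ‖S‖) / 2, ?_⟩
  rw [Real.cos_arccos (by linarith [norm_nonneg S]) hS, ← exp_nat_mul, mul_left_comm,
    ← exp_add]
  conv_lhs => rw [← norm_mul_exp_arg_mul_I S]
  push_cast
  ring_nf

noncomputable def standardResource {n : Type*} [DecidableEq n] (i₀ i₁ : n) (θ : ℝ) : n → ℂ :=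
  fun i => if i = i₀ then 1 / (Real.sqrt 2 : ℂ)
    else if i = i₁ then exp (I * θ) / (Real.sqrt 2 : ℂ) else 0

section standardResource

variable {n : Type*} [Fintype n] [DecidableEq n] {i₀ i₁ : n}

theorem sum_standardResource (h : i₀ ≠ i₁) (θ : ℝ) {R : Type*} [AddCommMonoid R] (g : ℂ → R)
    (hg : g 0 = 0) :
    ∑ i, g (standardResource i₀ i₁ θ i) = g (1 / Real.sqrt 2) + g (exp (I * θ) / Real.sqrt 2) := by
  rw [Fintype.sum_eq_add i₀ i₁ h]
  · simp [standardResource, h.symm]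
  · rintro i ⟨h0, h1⟩
    simp [standardResource, h0, h1, hg]

theorem sum_norm_sq_standardResource (h : i₀ ≠ i₁) (θ : ℝ) :
    ∑ i, ‖standardResource i₀ i₁ θ i‖ ^ 2 = 1 := by
  rw [sum_standardResource h θ (‖·‖ ^ 2) (by simp)]
  norm_num [norm_exp_I_mul_ofReal]

theorem sum_sq_standardResource (h : i₀ ≠ i₁) (θ : ℝ) :
    ∑ i, standardResource i₀ i₁ θ i ^ 2 = Real.cos θ * exp (I * θ) := by
  rw [sum_standardResource h θ (· ^ 2) (by simp)]
  have h2 : ((Real.sqrt 2 : ℝ) : ℂ) ^ 2 = 2 := by norm_cast; simp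
  rw [div_pow, div_pow, h2, ofReal_cos, mul_comm I, exp_mul_I]
  linear_combination (-1 / 2 : ℂ) * sin_sq_add_cos_sq (θ : ℂ) + sin θ ^ 2 / 2 * I_sq

end standardResource

theorem standard_resource_form
    {d : ℕ} (hd : 2 ≤ d) (ψ : Fin d → ℂ)
    (hψ : ∑ i, ‖ψ i‖ ^ 2 = 1) :
    ∃ K : Matrix (Fin d) (Fin d) ℝ, Kᵀ * K = 1 ∧
      ∃ θ : ℝ, θ ∈ Set.Icc 0 (Real.pi / 2) ∧ ∃ γ : ℝ,
        (K.map (Complex.ofReal)).mulVec ψ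
          = fun i => Complex.exp (Complex.I * (γ : ℂ)) *
              (if i = (⟨0, by omega⟩ : Fin d) then (1 / (Real.sqrt 2 : ℂ))
               else if i = (⟨1, by omega⟩ : Fin d) then
                 Complex.exp (Complex.I * (θ : ℂ)) / (Real.sqrt 2 : ℂ)
               else 0) := by
  have hS : ‖∑ i, ψ i ^ 2‖ ≤ 1 :=
    hψ ▸ (norm_sum_le _ _).trans_eq (by simp only [norm_pow])
  obtain ⟨θ, hθ, γ, hγ⟩ := exists_cos_mul_exp_phase_of_norm_le_one hS
  have h01 : (⟨0, by omega⟩ : Fin d) ≠ ⟨1, by omega⟩ := by simp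
  obtain ⟨K, hK, hKψ⟩ := exists_orthogonal_map_ofReal_mulVec_eq (z := ψ)
    (w := exp (I * γ) • standardResource ⟨0, by omega⟩ ⟨1, by omega⟩ θ)
    (by simp [norm_exp_I_mul_ofReal, sum_norm_sq_standardResource h01, hψ])
    (by simp [mul_pow, ← Finset.mul_sum, sum_sq_standardResource h01, hγ])
  exact ⟨K, hK, θ, hθ, γ, hKψ⟩
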